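/- arXiv:1302.4849 — 4 statements merged into one kernel-verified Lean document; each statement's English description precedes it below -/
import Mathlib

section
/- Fix n ∈ ℕ and set θ = π/(2(n+1)). For any integer a, any even integer m with |m| ≤ 2n, and f ∈ {cos, sin}, one has ∑_{j=0}^{2n+1} (−1)^j f((a + m·j)·θ) = 0. -/
open Real Finset

theorem alternating_trig_sum_zero (n : ℕ) (hn : 0 < n) (a m : ℤ)
    (hm : Even m) (hm' : |m| ≤ 2 * n) (f : ℝ → ℝ)
    (hf : f = Real.cos ∨ f = Real.sin) :
    ∑ j ∈ Finset.range (2 * n + 2),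
      (-1 : ℝ) ^ j * f (((a + m * j : ℤ) : ℝ) * (Real.pi / (2 * (n + 1)))) = 0 := by
  set θ : ℝ := Real.pi / (2 * (n + 1)) with hθ
  have hθpos : 0 < θ := by positivity
  have hkey : θ * (2 * ((n : ℝ) + 1)) = Real.pi := by
    rw [hθ]; field_simp
  have hθlt : |(m : ℝ) * θ| < Real.pi := by
    rw [abs_mul, abs_of_pos hθpos]
    have h1 : |(m : ℝ)| ≤ 2 * n := by
      rw [← Int.cast_abs]; exact_mod_cast hm'
    nlinarith [Real.pi_pos, abs_nonneg (m : ℝ)]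
  set w : ℂ := Complex.exp ((((m : ℝ) * θ : ℝ) : ℂ) * Complex.I) with hw
  have hwne : -w ≠ 1 := by
    intro h
    have hw1 : w = -1 := by linear_combination -h
    have hcos : Real.cos ((m : ℝ) * θ) = -1 := by
      have := congrArg Complex.re hw1
      rwa [hw, Complex.exp_ofReal_mul_I_re] at this
    obtain ⟨k, hk⟩ := Real.cos_eq_neg_one_iff.mp hcos
    rw [← hk, abs_lt] at hθlt
    have hπ := Real.pi_pos
    rcases le_or_gt 0 k with h0 | h0
    · have : (0:ℝ) ≤ (k:ℝ) := by exact_mod_cast h0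
      nlinarith
    · have hk1 : k ≤ -1 := by omega
      have : (k:ℝ) ≤ -1 := by exact_mod_cast hk1
      nlinarith
  have hwpow : (-w) ^ (2 * n + 2) = 1 := by
    have hne : ((n : ℂ) + 1) ≠ 0 := by
      have : ((n + 1 : ℕ) : ℂ) ≠ 0 := Nat.cast_ne_zero.mpr (Nat.succ_ne_zero n)
      push_cast at this; exact this
    have hw2 : w ^ (2 * n + 2) = 1 := by
      rw [hw, ← Complex.exp_nat_mul]
      have harg : ((2 * n + 2 : ℕ) : ℂ) * ((((m : ℝ) * θ : ℝ) : ℂ) * Complex.I)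
          = (m : ℤ) * ((Real.pi : ℂ) * Complex.I) := by
        push_cast [hθ]
        field_simp
      rw [harg, Complex.exp_int_mul, Complex.exp_pi_mul_I]
      exact hm.neg_one_zpow
    calc (-w) ^ (2 * n + 2) = w ^ (2 * n + 2) := Even.neg_pow ⟨n + 1, by ring⟩ w
      _ = 1 := hw2
  have hgeom : ∑ j ∈ Finset.range (2 * n + 2), (-w) ^ j = 0 := by
    rw [geom_sum_eq hwne, hwpow, sub_self, zero_div]
  have hC : ∑ j ∈ Finset.range (2 * n + 2),
      (-1 : ℂ) ^ j * Complex.exp (((((a + m * j : ℤ) : ℝ) * θ : ℝ) : ℂ) * Complex.I) = 0 := by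
    have hterm : ∀ j ∈ Finset.range (2 * n + 2),
        (-1 : ℂ) ^ j * Complex.exp (((((a + m * j : ℤ) : ℝ) * θ : ℝ) : ℂ) * Complex.I)
          = Complex.exp ((((a : ℝ) * θ : ℝ) : ℂ) * Complex.I) * (-w) ^ j := by
      intro j _
      have hcomb : Complex.exp ((((a : ℝ) * θ : ℝ) : ℂ) * Complex.I)
          * Complex.exp ((j : ℂ) * ((((m : ℝ) * θ : ℝ) : ℂ) * Complex.I))
          = Complex.exp (((((a + m * j : ℤ) : ℝ) * θ : ℝ) : ℂ) * Complex.I) := by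
        rw [← Complex.exp_add]
        congr 1
        push_cast
        ring
      rw [neg_pow w, hw, ← Complex.exp_nat_mul, ← hcomb]
      ring
    rw [Finset.sum_congr rfl hterm, ← Finset.mul_sum, hgeom, mul_zero]
  rcases hf with rfl | rfl
  · have h := congrArg Complex.re hC
    rw [Complex.re_sum] at h
    calc ∑ j ∈ Finset.range (2 * n + 2),
          (-1 : ℝ) ^ j * Real.cos (((a + m * j : ℤ) : ℝ) * θ)
        = ∑ j ∈ Finset.range (2 * n + 2),
          ((-1 : ℂ) ^ j * Complex.exp (((((a + m * j : ℤ) : ℝ) * θ : ℝ) : ℂ) * Complex.I)).re := by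
          refine Finset.sum_congr rfl fun j _ => ?_
          rw [show ((-1 : ℂ) ^ j) = ((((-1 : ℝ) ^ j : ℝ)) : ℂ) by push_cast; rfl,
            Complex.re_ofReal_mul, Complex.exp_ofReal_mul_I_re]
      _ = 0 := by rw [h]; simp
  · have h := congrArg Complex.im hC
    rw [Complex.im_sum] at h
    calc ∑ j ∈ Finset.range (2 * n + 2),
          (-1 : ℝ) ^ j * Real.sin (((a + m * j : ℤ) : ℝ) * θ)
        = ∑ j ∈ Finset.range (2 * n + 2),
          ((-1 : ℂ) ^ j * Complex.exp (((((a + m * j : ℤ) : ℝ) * θ : ℝ) : ℂ) * Complex.I)).im := by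
          refine Finset.sum_congr rfl fun j _ => ?_
          rw [show ((-1 : ℂ) ^ j) = ((((-1 : ℝ) ^ j : ℝ)) : ℂ) by push_cast; rfl,
            Complex.im_ofReal_mul, Complex.exp_ofReal_mul_I_im]
      _ = 0 := by rw [h]; simp
end

section
/- Fix n ∈ ℕ and set θ = π/(2(n+1)). Let s, t ∈ ℤ with max{|s|,|t|} ≤ n−1 and s ≡ t (mod 2), let a ∈ ℤ, and let f, g, h each be one of ±cos(·θ), ±sin(·θ). Then ∑_{j=0}^{2n+1} (−1)^j f(a+2j) g(sj) h(tj) = 0 and ∑_{j=0}^{2n+1} (−1)^j g(sj) h(tj) = 0. -/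
open Real Finset

namespace AltTriple

noncomputable def uu (n : ℕ) : ℂ := Complex.exp (Complex.I * (Real.pi / (2 * (n + 1))))

lemma uu_ne_zero (n : ℕ) : uu n ≠ 0 := Complex.exp_ne_zero _

lemma uu_zpow (n : ℕ) (m : ℤ) :
    (uu n) ^ m = Complex.exp (Complex.I * (m * (Real.pi / (2 * (n + 1))))) := by
  rw [uu, ← Complex.exp_int_mul]
  ring_nf

/-- the key cancellation -/
lemma key (n : ℕ) (m : ℤ) (hm : m % 2 = 0) (hm1 : |m| ≤ 2 * n) :
    ∑ j ∈ Finset.range (2 * n + 2), (-1 : ℂ) ^ j * (uu n) ^ (m * j) = 0 := by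
  have hterm : ∀ j ∈ Finset.range (2 * n + 2),
      (-1 : ℂ) ^ j * (uu n) ^ (m * j) = (-(uu n) ^ m) ^ j := by
    intro j _
    rw [zpow_mul, zpow_natCast]
    exact (neg_pow _ _).symm
  rw [Finset.sum_congr rfl hterm]
  have hne : (-(uu n) ^ m) ≠ 1 := by
    intro hcon
    have h1 : (uu n) ^ m = -1 := by linear_combination -hcon
    rw [uu_zpow] at h1
    have h2 : Complex.exp (Complex.I * (m * (Real.pi / (2 * (n + 1)))) - Real.pi * Complex.I) = 1 := by
      rw [Complex.exp_sub, h1, Complex.exp_pi_mul_I]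
      norm_num
    rw [Complex.exp_eq_one_iff] at h2
    obtain ⟨k, hk⟩ := h2
    have hI : (Complex.I * (m * (Real.pi / (2 * (n + 1)))) - Real.pi * Complex.I)
        = ((m * (Real.pi / (2 * (n + 1))) - Real.pi : ℝ) : ℂ) * Complex.I := by
      push_cast; ring
    have hk2 : ((m * (Real.pi / (2 * (n + 1))) - Real.pi : ℝ) : ℂ) * Complex.I
        = ((k * (2 * Real.pi) : ℝ) : ℂ) * Complex.I := by
      rw [← hI, hk]; push_cast; ring
    have hk3 : (m * (Real.pi / (2 * (n + 1))) - Real.pi : ℝ) = (k * (2 * Real.pi) : ℝ) := by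
      have := mul_right_cancel₀ Complex.I_ne_zero hk2
      exact_mod_cast this
    have hn1 : ((2 : ℝ) * (n + 1)) ≠ 0 := by positivity
    have hm2 : (m : ℝ) = (2 * k + 1) * (2 * (n + 1)) := by
      field_simp at hk3
      nlinarith [hk3, Real.pi_pos]
    have hm3 : m = (2 * k + 1) * (2 * (n + 1)) := by exact_mod_cast hm2
    have habs : (2 * (n : ℤ) + 2) ≤ |m| := by
      rw [hm3, abs_mul]
      have h1 : (1 : ℤ) ≤ |2 * k + 1| := by
        rcases abs_cases (2 * k + 1) with ⟨hc, _⟩ | ⟨hc, _⟩ <;> omega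
      have h2 : |(2 * ((n : ℤ) + 1))| = 2 * n + 2 := by
        rw [abs_of_nonneg (by positivity)]; ring
      calc (2 * (n : ℤ) + 2) = 1 * (2 * n + 2) := by ring
        _ ≤ |2 * k + 1| * |2 * ((n : ℤ) + 1)| := by
            rw [h2]; exact mul_le_mul_of_nonneg_right h1 (by positivity)
    omega
  rw [geom_sum_eq hne]
  have hpow : (-(uu n) ^ m) ^ (2 * n + 2) = 1 := by
    rw [neg_pow, Even.neg_one_pow (by exact ⟨n + 1, by ring⟩)]
    rw [one_mul, ← zpow_natCast ((uu n) ^ m), ← zpow_mul, uu_zpow]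
    rw [Complex.exp_eq_one_iff]
    obtain ⟨l, hl⟩ : ∃ l, m = 2 * l := ⟨m / 2, by omega⟩
    subst hl
    refine ⟨l, ?_⟩
    have hnz : ((n : ℂ) + 1) ≠ 0 := Nat.cast_add_one_ne_zero n
    push_cast
    field_simp
  rw [hpow]
  simp


lemma exp_eq (n : ℕ) (k : ℤ) :
    Complex.exp ((((k : ℝ) * (Real.pi / (2 * (n + 1)))) : ℝ) * Complex.I) = (uu n) ^ k := by
  rw [uu_zpow]; congr 1; push_cast; ring

lemma exp_eq' (n : ℕ) (k : ℤ) :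
    Complex.exp (-(((k : ℝ) * (Real.pi / (2 * (n + 1)))) : ℝ) * Complex.I) = (uu n) ^ (-k) := by
  rw [uu_zpow]; congr 1; push_cast; ring

lemma repr (n : ℕ) (F : ℝ → ℝ)
    (hF : F = Real.cos ∨ F = Real.sin ∨ F = -Real.cos ∨ F = -Real.sin) :
    ∃ c d : ℂ, ∀ k : ℤ,
      ((F ((k : ℝ) * (Real.pi / (2 * (n + 1)))) : ℝ) : ℂ)
        = c * (uu n) ^ k + d * (uu n) ^ (-k) := by
  rcases hF with rfl | rfl | rfl | rfl
  · exact ⟨1/2, 1/2, fun k => by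
      rw [Complex.ofReal_cos, Complex.cos, exp_eq, exp_eq']; ring⟩
  · exact ⟨-Complex.I/2, Complex.I/2, fun k => by
      rw [Complex.ofReal_sin, Complex.sin, exp_eq, exp_eq']; ring⟩
  · exact ⟨-(1/2), -(1/2), fun k => by
      simp only [Pi.neg_apply, Complex.ofReal_neg]
      rw [Complex.ofReal_cos, Complex.cos, exp_eq, exp_eq']; ring⟩
  · exact ⟨Complex.I/2, -Complex.I/2, fun k => by
      simp only [Pi.neg_apply, Complex.ofReal_neg]
      rw [Complex.ofReal_sin, Complex.sin, exp_eq, exp_eq']; ring⟩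

end AltTriple

theorem alternating_triple_product_sum_zero (n : ℕ) (hn : 1 ≤ n) (a s t : ℤ)
    (hst : max |s| |t| ≤ (n : ℤ) - 1) (hpar : s % 2 = t % 2)
    (f g h : ℝ → ℝ)
    (hf : f = Real.cos ∨ f = Real.sin ∨ f = -Real.cos ∨ f = -Real.sin)
    (hg : g = Real.cos ∨ g = Real.sin ∨ g = -Real.cos ∨ g = -Real.sin)
    (hh : h = Real.cos ∨ h = Real.sin ∨ h = -Real.cos ∨ h = -Real.sin) :
    (∑ j ∈ Finset.range (2 * n + 2),
        (-1 : ℝ) ^ j * f (((a + 2 * j : ℤ) : ℝ) * (Real.pi / (2 * (n + 1))))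
          * g (((s * j : ℤ) : ℝ) * (Real.pi / (2 * (n + 1))))
          * h (((t * j : ℤ) : ℝ) * (Real.pi / (2 * (n + 1)))) = 0)
    ∧ (∑ j ∈ Finset.range (2 * n + 2),
        (-1 : ℝ) ^ j * g (((s * j : ℤ) : ℝ) * (Real.pi / (2 * (n + 1))))
          * h (((t * j : ℤ) : ℝ) * (Real.pi / (2 * (n + 1)))) = 0) := by
  set u := AltTriple.uu n with hu_def
  have hu : u ≠ 0 := AltTriple.uu_ne_zero n
  obtain ⟨c1, d1, h1⟩ := AltTriple.repr n f hf
  obtain ⟨c2, d2, h2⟩ := AltTriple.repr n g hg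
  obtain ⟨c3, d3, h3⟩ := AltTriple.repr n h hh
  have hs' := abs_le.mp (le_trans (le_max_left _ _) hst)
  have ht' := abs_le.mp (le_trans (le_max_right _ _) hst)
  have K0 : ∀ m : ℤ, m % 2 = 0 → |m| ≤ 2 * (n : ℤ) →
      (∑ j ∈ Finset.range (2 * n + 2), (-1 : ℂ) ^ j * u ^ (m * (j : ℤ))) = 0 :=
    fun m hm hm' => AltTriple.key n m hm hm'
  constructor
  · have expand : ∀ j : ℕ,
        ((-1 : ℂ) ^ j * (c1 * u ^ (a + 2 * (j : ℤ)) + d1 * u ^ (-(a + 2 * (j : ℤ))))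
          * (c2 * u ^ (s * (j : ℤ)) + d2 * u ^ (-(s * (j : ℤ))))
          * (c3 * u ^ (t * (j : ℤ)) + d3 * u ^ (-(t * (j : ℤ)))))
        = c1 * u ^ a * c2 * c3 * ((-1 : ℂ) ^ j * u ^ ((2 + s + t) * (j : ℤ)))
        + c1 * u ^ a * c2 * d3 * ((-1 : ℂ) ^ j * u ^ ((2 + s - t) * (j : ℤ)))
        + c1 * u ^ a * d2 * c3 * ((-1 : ℂ) ^ j * u ^ ((2 - s + t) * (j : ℤ)))
        + c1 * u ^ a * d2 * d3 * ((-1 : ℂ) ^ j * u ^ ((2 - s - t) * (j : ℤ)))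
        + d1 * u ^ (-a) * c2 * c3 * ((-1 : ℂ) ^ j * u ^ ((-2 + s + t) * (j : ℤ)))
        + d1 * u ^ (-a) * c2 * d3 * ((-1 : ℂ) ^ j * u ^ ((-2 + s - t) * (j : ℤ)))
        + d1 * u ^ (-a) * d2 * c3 * ((-1 : ℂ) ^ j * u ^ ((-2 - s + t) * (j : ℤ)))
        + d1 * u ^ (-a) * d2 * d3 * ((-1 : ℂ) ^ j * u ^ ((-2 - s - t) * (j : ℤ))) := by
      intro j
      rw [show ((2 : ℤ) + s + t) * (j : ℤ) = 2 * j + s * j + t * j from by ring,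
          show ((2 : ℤ) + s - t) * (j : ℤ) = 2 * j + s * j + -(t * j) from by ring,
          show ((2 : ℤ) - s + t) * (j : ℤ) = 2 * j + -(s * j) + t * j from by ring,
          show ((2 : ℤ) - s - t) * (j : ℤ) = 2 * j + -(s * j) + -(t * j) from by ring,
          show ((-2 : ℤ) + s + t) * (j : ℤ) = -(2 * j) + s * j + t * j from by ring,
          show ((-2 : ℤ) + s - t) * (j : ℤ) = -(2 * j) + s * j + -(t * j) from by ring,
          show ((-2 : ℤ) - s + t) * (j : ℤ) = -(2 * j) + -(s * j) + t * j from by ring,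
          show ((-2 : ℤ) - s - t) * (j : ℤ) = -(2 * j) + -(s * j) + -(t * j) from by ring]
      simp only [zpow_add₀ hu, zpow_neg]
      ring
    have hC1 : (∑ j ∈ Finset.range (2 * n + 2),
        (-1 : ℂ) ^ j * (c1 * u ^ (a + 2 * (j : ℤ)) + d1 * u ^ (-(a + 2 * (j : ℤ))))
          * (c2 * u ^ (s * (j : ℤ)) + d2 * u ^ (-(s * (j : ℤ))))
          * (c3 * u ^ (t * (j : ℤ)) + d3 * u ^ (-(t * (j : ℤ))))) = 0 := by
      rw [Finset.sum_congr rfl (fun j _ => expand j)]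
      simp only [Finset.sum_add_distrib, ← Finset.mul_sum]
      rw [K0 (2 + s + t) (by omega) (by rw [abs_le]; omega),
          K0 (2 + s - t) (by omega) (by rw [abs_le]; omega),
          K0 (2 - s + t) (by omega) (by rw [abs_le]; omega),
          K0 (2 - s - t) (by omega) (by rw [abs_le]; omega),
          K0 (-2 + s + t) (by omega) (by rw [abs_le]; omega),
          K0 (-2 + s - t) (by omega) (by rw [abs_le]; omega),
          K0 (-2 - s + t) (by omega) (by rw [abs_le]; omega),
          K0 (-2 - s - t) (by omega) (by rw [abs_le]; omega)]
      ring
    have hcast : ((∑ j ∈ Finset.range (2 * n + 2),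
        (-1 : ℝ) ^ j * f (((a + 2 * j : ℤ) : ℝ) * (Real.pi / (2 * (n + 1))))
          * g (((s * j : ℤ) : ℝ) * (Real.pi / (2 * (n + 1))))
          * h (((t * j : ℤ) : ℝ) * (Real.pi / (2 * (n + 1)))) : ℝ) : ℂ)
        = ∑ j ∈ Finset.range (2 * n + 2),
        (-1 : ℂ) ^ j * (c1 * u ^ (a + 2 * (j : ℤ)) + d1 * u ^ (-(a + 2 * (j : ℤ))))
          * (c2 * u ^ (s * (j : ℤ)) + d2 * u ^ (-(s * (j : ℤ))))
          * (c3 * u ^ (t * (j : ℤ)) + d3 * u ^ (-(t * (j : ℤ)))) := by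
      rw [Complex.ofReal_sum]
      refine Finset.sum_congr rfl fun j _ => ?_
      rw [Complex.ofReal_mul, Complex.ofReal_mul, Complex.ofReal_mul, Complex.ofReal_pow,
          Complex.ofReal_neg, Complex.ofReal_one, h1 (a + 2 * (j : ℤ)), h2 (s * (j : ℤ)),
          h3 (t * (j : ℤ))]
    exact_mod_cast hcast.trans hC1
  · have expand : ∀ j : ℕ,
        ((-1 : ℂ) ^ j * (c2 * u ^ (s * (j : ℤ)) + d2 * u ^ (-(s * (j : ℤ))))
          * (c3 * u ^ (t * (j : ℤ)) + d3 * u ^ (-(t * (j : ℤ)))))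
        = c2 * c3 * ((-1 : ℂ) ^ j * u ^ ((s + t) * (j : ℤ)))
        + c2 * d3 * ((-1 : ℂ) ^ j * u ^ ((s - t) * (j : ℤ)))
        + d2 * c3 * ((-1 : ℂ) ^ j * u ^ ((-s + t) * (j : ℤ)))
        + d2 * d3 * ((-1 : ℂ) ^ j * u ^ ((-s - t) * (j : ℤ))) := by
      intro j
      rw [show (s + t) * (j : ℤ) = s * j + t * j from by ring,
          show (s - t) * (j : ℤ) = s * j + -(t * j) from by ring,
          show (-s + t) * (j : ℤ) = -(s * j) + t * j from by ring,
          show (-s - t) * (j : ℤ) = -(s * j) + -(t * j) from by ring]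
      simp only [zpow_add₀ hu, zpow_neg]
      ring
    have hC1 : (∑ j ∈ Finset.range (2 * n + 2),
        (-1 : ℂ) ^ j * (c2 * u ^ (s * (j : ℤ)) + d2 * u ^ (-(s * (j : ℤ))))
          * (c3 * u ^ (t * (j : ℤ)) + d3 * u ^ (-(t * (j : ℤ))))) = 0 := by
      rw [Finset.sum_congr rfl (fun j _ => expand j)]
      simp only [Finset.sum_add_distrib, ← Finset.mul_sum]
      rw [K0 (s + t) (by omega) (by rw [abs_le]; omega),
          K0 (s - t) (by omega) (by rw [abs_le]; omega),
          K0 (-s + t) (by omega) (by rw [abs_le]; omega),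
          K0 (-s - t) (by omega) (by rw [abs_le]; omega)]
      ring
    have hcast : ((∑ j ∈ Finset.range (2 * n + 2),
        (-1 : ℝ) ^ j * g (((s * j : ℤ) : ℝ) * (Real.pi / (2 * (n + 1))))
          * h (((t * j : ℤ) : ℝ) * (Real.pi / (2 * (n + 1)))) : ℝ) : ℂ)
        = ∑ j ∈ Finset.range (2 * n + 2),
        (-1 : ℂ) ^ j * (c2 * u ^ (s * (j : ℤ)) + d2 * u ^ (-(s * (j : ℤ))))
          * (c3 * u ^ (t * (j : ℤ)) + d3 * u ^ (-(t * (j : ℤ)))) := by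
      rw [Complex.ofReal_sum]
      refine Finset.sum_congr rfl fun j _ => ?_
      rw [Complex.ofReal_mul, Complex.ofReal_mul, Complex.ofReal_pow,
          Complex.ofReal_neg, Complex.ofReal_one, h2 (s * (j : ℤ)), h3 (t * (j : ℤ))]
    exact_mod_cast hcast.trans hC1
end

section
/- Let n be a positive even integer, θ = π/(2(n+1)), and let k be an odd integer with 3 ≤ k ≤ 2n−1. Then ∑_{j=0}^{n/2−1} cos((1+2j)·θ) · cos(k(1+2j)·θ) = 0. -/
/-!
With `n = 2N`, `k = 2l + 1` and `θ = π / (2(2N + 1))`, product-to-sum turns each summand into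
the mean of `cos ((2j+1) x)` for `x = lπ/(2N+1)` and `x = (l+1)π/(2N+1)`. Telescoping
`sin x · ∑_{j<N} cos ((2j+1) x) = sin (2Nx) / 2` and `2Nx = aπ - x` for `x = aπ/(2N+1)` gives
`∑_{j<N} cos ((2j+1) x) = -(-1)^a / 2` whenever `0 < a < 2N + 1`, and the two values for
`a = l` and `a = l + 1` cancel.
-/

open Real Finset

lemma sum_range_cos_odd_mul_pi_div (N a : ℕ) (ha : 0 < a) (haN : a < 2 * N + 1) :
    ∑ j ∈ range N, cos ((2 * j + 1) * (a * π / (2 * N + 1))) = -(-1) ^ a / 2 := by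
  set x := a * π / (2 * N + 1) with hx
  have hsin : 0 < sin x := by
    apply sin_pos_of_pos_of_lt_pi (by positivity)
    rw [hx, div_lt_iff₀ (by positivity)]
    have : (a : ℝ) < 2 * N + 1 := by exact_mod_cast haN
    nlinarith [pi_pos]
  have hangle : 2 * N * x = a * π - x := by
    rw [hx]; field_simp; ring
  have hsum := sin_mul_sum_cos N (2 * x) x
  have hlhs : sin (2 * x / 2) * ∑ i ∈ range N, cos (2 * x * i + x)
      = sin x * ∑ j ∈ range N, cos ((2 * j + 1) * x) := by
    congr 1
    · ring_nf
    · exact sum_congr rfl fun j _ => by ring_nf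
  have hrhs : sin (N * (2 * x) / 2) * cos ((N - 1) * (2 * x) / 2 + x)
      = sin x * (-(-1) ^ a / 2) := by
    have hdouble : sin (N * x) * cos (N * x) = sin (2 * N * x) / 2 := by
      rw [mul_assoc, sin_two_mul]; ring
    rw [show (N - 1) * (2 * x) / 2 + x = N * x by ring, show N * (2 * x) / 2 = N * x by ring,
      hdouble, hangle, sin_nat_mul_pi_sub]
    ring
  exact mul_left_cancel₀ hsin.ne' (hlhs ▸ hrhs ▸ hsum)

lemma sum_range_cos_mul_cos_odd_mul_eq_zero (N l : ℕ) (hl : 0 < l) (hlN : l < 2 * N) :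
    ∑ j ∈ range N, cos ((2 * j + 1) * (π / (2 * (2 * N + 1))))
      * cos ((2 * l + 1) * (2 * j + 1) * (π / (2 * (2 * N + 1)))) = 0 := by
  have hterm : ∀ j : ℕ, cos ((2 * j + 1) * (π / (2 * (2 * N + 1))))
        * cos ((2 * l + 1) * (2 * j + 1) * (π / (2 * (2 * N + 1))))
      = (cos ((2 * j + 1) * (l * π / (2 * N + 1)))
        + cos ((2 * j + 1) * ((l + 1 : ℕ) * π / (2 * N + 1)))) / 2 := by
    intro j
    set θ := π / (2 * (2 * N + 1)) with hθ
    have h := two_mul_cos_mul_cos ((2 * l + 1) * (2 * j + 1) * θ) ((2 * j + 1) * θ)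
    rw [show (2 * l + 1) * (2 * j + 1) * θ - (2 * j + 1) * θ
        = (2 * j + 1) * (l * π / (2 * N + 1)) by rw [hθ]; field_simp; ring,
      show (2 * l + 1) * (2 * j + 1) * θ + (2 * j + 1) * θ
        = (2 * j + 1) * ((l + 1 : ℕ) * π / (2 * N + 1)) by
          rw [hθ]; push_cast; field_simp; ring] at h
    linarith
  simp_rw [hterm, ← sum_div, sum_add_distrib, sum_range_cos_odd_mul_pi_div N l hl (by omega),
    sum_range_cos_odd_mul_pi_div N (l + 1) l.succ_pos (by omega), pow_succ]
  ring

theorem cos_product_sum_zero_general (n : ℕ) (hne : Even n)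
    (k : ℤ) (hk : Odd k) (hk3 : 3 ≤ k) (hk' : k ≤ 2 * n - 1) :
    ∑ j ∈ Finset.range (n / 2),
        Real.cos (((1 + 2 * j : ℕ) : ℝ) * (Real.pi / (2 * (n + 1))))
          * Real.cos ((k : ℝ) * ((1 + 2 * j : ℕ) : ℝ) * (Real.pi / (2 * (n + 1)))) = 0 := by
  obtain ⟨N, rfl⟩ := hne
  obtain ⟨m, rfl⟩ := hk
  lift m to ℕ using (by omega)
  have hsum := sum_range_cos_mul_cos_odd_mul_eq_zero N m (by omega) (by omega)
  rw [show (N + N) / 2 = N by omega]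
  convert hsum using 3 <;> push_cast <;> ring_nf

theorem cos_product_sum_zero (n : ℕ) (hn : 0 < n) (hne : Even n)
    (k : ℤ) (hk : Odd k) (hk3 : 3 ≤ k) (hk' : k ≤ 2 * n - 1) :
    ∑ j ∈ Finset.range (n / 2),
        Real.cos (((1 + 2 * j : ℕ) : ℝ) * (Real.pi / (2 * (n + 1))))
          * Real.cos ((k : ℝ) * ((1 + 2 * j : ℕ) : ℝ) * (Real.pi / (2 * (n + 1)))) = 0 :=
  cos_product_sum_zero_general n hne k hk hk3 hk'
end

section
/- Let G be a twin-free bipartite graph (no two distinct vertices have the same neighbour set) in which some vertex v has degree at least 3. Then there exist two further vertices on the same side as v distinguishing among three neighbours of v; concretely, G contains as an induced subgraph one of the three bipartite graphs whose biadjacency matrices are [[1,1,1],[1,0,0],[0,0,1]] (up to row/column permutation and transpose), [[1,1,0],[1,1,1],[0,1,0]]-type, or [[1,1,0],[1,1,1],[0,1,1]]. -/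
/-!
Let `a` be adjacent to three distinct vertices `b₀, b₁, b₂`. By twin-freeness some `x` separates
`b₀` from `b₁`; `x` then fails to separate `b₂` from at most one of them, and a second vertex `y`
separates that last pair. The rows of `a, x, y` restricted to the columns `b₀, b₁, b₂` form a
0-1 matrix with an all-ones row whose other two rows together separate all columns, and a finite
check shows that every such matrix is a row and column permutation of one of the three patterns.
-/

open Matrix Function

def degreeThreePatterns : Set (Matrix (Fin 3) (Fin 3) ℕ) :=
  {!![1,1,1; 1,0,0; 0,0,1], !![1,1,0; 1,1,1; 0,1,0], !![1,1,0; 1,1,1; 0,1,1]}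

def ContainsInduced {α β : Type*} (E : α → β → Prop) {m n : ℕ} (P : Matrix (Fin m) (Fin n) ℕ) :
    Prop :=
  ∃ (r : Fin m ↪ α) (c : Fin n ↪ β), ∀ i j, E (r i) (c j) ↔ P i j = 1

/-- Rows: a vertex adjacent to all three columns, then two vertices with neighbourhoods `v`, `w`. -/
def apexMatrix (v w : Fin 3 → Bool) : Fin 3 → Fin 3 → Bool :=
  ![fun _ => true, v, w]

set_option synthInstance.maxSize 1024 in
lemma apexMatrix_injective_and_exists_perm (v w : Fin 3 → Bool)
    (hsep : ∀ j k, j ≠ k → v j ≠ v k ∨ w j ≠ w k) :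
    Injective (apexMatrix v w) ∧ ∃ σ τ : Equiv.Perm (Fin 3),
      (∀ i j, apexMatrix v w (σ i) (τ j) = true ↔ !![1,1,1; 1,0,0; 0,0,1] i j = 1) ∨
      (∀ i j, apexMatrix v w (σ i) (τ j) = true ↔ !![1,1,0; 1,1,1; 0,1,0] i j = 1) ∨
      (∀ i j, apexMatrix v w (σ i) (τ j) = true ↔ !![1,1,0; 1,1,1; 0,1,1] i j = 1) := by
  revert v w
  -- instance search does not see through the `Matrix` type synonym to `Nat.decEq`
  let _ : ∀ (M : Matrix (Fin 3) (Fin 3) ℕ) i j, Decidable (M i j = 1) := fun _ _ _ => Nat.decEq _ _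
  decide

lemma apexMatrix_injective_and_exists_mem_degreeThreePatterns (v w : Fin 3 → Bool)
    (hsep : ∀ j k, j ≠ k → v j ≠ v k ∨ w j ≠ w k) :
    Injective (apexMatrix v w) ∧ ∃ P ∈ degreeThreePatterns, ∃ σ τ : Equiv.Perm (Fin 3),
      ∀ i j, apexMatrix v w (σ i) (τ j) = true ↔ P i j = 1 := by
  obtain ⟨hinj, σ, τ, h | h | h⟩ := apexMatrix_injective_and_exists_perm v w hsep
  exacts [⟨hinj, _, .inl rfl, σ, τ, h⟩, ⟨hinj, _, .inr (.inl rfl), σ, τ, h⟩,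
    ⟨hinj, _, .inr (.inr rfl), σ, τ, h⟩]

section

variable {α β : Type*} {E : α → β → Prop}

lemma injective_of_adj_iff {ι κ : Type*} {f : ι → α} {g : κ → β} {Q : ι → κ → Bool}
    (hQ : Injective Q) (h : ∀ i j, E (f i) (g j) ↔ Q i j = true) : Injective f := by
  intro i i' hi
  refine hQ (funext fun j => Bool.eq_iff_iff.mpr ?_)
  rw [← h, ← h, hi]

lemma exists_separating_rows (htwin : ∀ x y : β, (∀ a, E a x ↔ E a y) → x = y)
    {b : Fin 3 → β} (hb : Injective b) :
    ∃ x y : α, ∀ j k, j ≠ k → ¬(E x (b j) ↔ E x (b k)) ∨ ¬(E y (b j) ↔ E y (b k)) := by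
  have separate : ∀ j k, j ≠ k → ∃ x, ¬(E x (b j) ↔ E x (b k)) := fun j k hjk => by
    by_contra! h
    exact hjk (hb (htwin _ _ h))
  obtain ⟨x, hx⟩ := separate 0 1 (by decide)
  by_cases h20 : E x (b 2) ↔ E x (b 0)
  · obtain ⟨y, hy⟩ := separate 2 0 (by decide)
    refine ⟨x, y, fun j k hjk => ?_⟩
    fin_cases j <;> fin_cases k <;> simp only [ne_eq, not_true_eq_false] at hjk ⊢ <;> tauto
  · obtain ⟨y, hy⟩ := separate 2 1 (by decide)
    refine ⟨x, y, fun j k hjk => ?_⟩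
    fin_cases j <;> fin_cases k <;> simp only [ne_eq, not_true_eq_false] at hjk ⊢ <;> tauto

lemma exists_mem_degreeThreePatterns_containsInduced
    (htwin : ∀ x y : β, (∀ a, E a x ↔ E a y) → x = y) (a : α) (b : Fin 3 ↪ β)
    (ha : ∀ j, E a (b j)) : ∃ P ∈ degreeThreePatterns, ContainsInduced E P := by
  classical
  obtain ⟨x, y, hxy⟩ := exists_separating_rows htwin b.injective
  set v := fun j => decide (E x (b j))
  set w := fun j => decide (E y (b j))
  have hsep : ∀ j k, j ≠ k → v j ≠ v k ∨ w j ≠ w k := by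
    simpa only [v, w, ne_eq, decide_eq_decide] using hxy
  have hadj : ∀ i j, E (![a, x, y] i) (b j) ↔ apexMatrix v w i j = true := by
    intro i j
    fin_cases i <;> simp [apexMatrix, v, w, ha]
  obtain ⟨hrows, P, hP, σ, τ, hστ⟩ := apexMatrix_injective_and_exists_mem_degreeThreePatterns v w hsep
  let r : Fin 3 ↪ α := ⟨_, injective_of_adj_iff hrows hadj⟩
  exact ⟨P, hP, σ.toEmbedding.trans r, τ.toEmbedding.trans b,
    fun i j => (hadj _ _).trans (hστ i j)⟩

end

lemma injective_vecThree {γ : Type*} {p q r : γ} (hpq : p ≠ q) (hpr : p ≠ r) (hqr : q ≠ r) :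
    Injective ![p, q, r] := by
  intro i j h
  fin_cases i <;> fin_cases j <;> simp_all

theorem twin_free_degree_three {α β : Type*} (E : α → β → Prop)
    (htwinR : ∀ x y : α, (∀ b, E x b ↔ E y b) → x = y)
    (htwinC : ∀ x y : β, (∀ a, E a x ↔ E a y) → x = y)
    (hdeg : (∃ (a : α) (b₁ b₂ b₃ : β), b₁ ≠ b₂ ∧ b₁ ≠ b₃ ∧ b₂ ≠ b₃ ∧
              E a b₁ ∧ E a b₂ ∧ E a b₃) ∨
            (∃ (b : β) (a₁ a₂ a₃ : α), a₁ ≠ a₂ ∧ a₁ ≠ a₃ ∧ a₂ ≠ a₃ ∧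
              E a₁ b ∧ E a₂ b ∧ E a₃ b)) :
    ∃ P ∈ ({!![1,1,1; 1,0,0; 0,0,1],
             !![1,1,0; 1,1,1; 0,1,0],
             !![1,1,0; 1,1,1; 0,1,1]} : Set (Matrix (Fin 3) (Fin 3) ℕ)),
      (∃ (r : Fin 3 ↪ α) (c : Fin 3 ↪ β), ∀ i j, E (r i) (c j) ↔ P i j = 1) ∨
      (∃ (r : Fin 3 ↪ β) (c : Fin 3 ↪ α), ∀ i j, E (c j) (r i) ↔ P i j = 1) := by
  rcases hdeg with ⟨a, b₁, b₂, b₃, h12, h13, h23, e1, e2, e3⟩ |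
    ⟨b, a₁, a₂, a₃, h12, h13, h23, e1, e2, e3⟩
  · obtain ⟨P, hP, hE⟩ := exists_mem_degreeThreePatterns_containsInduced htwinC a
      ⟨_, injective_vecThree h12 h13 h23⟩ fun j => by fin_cases j <;> assumption
    exact ⟨P, hP, .inl hE⟩
  · obtain ⟨P, hP, hE⟩ := exists_mem_degreeThreePatterns_containsInduced (E := fun b a => E a b)
      htwinR b ⟨_, injective_vecThree h12 h13 h23⟩ fun j => by fin_cases j <;> assumption
    exact ⟨P, hP, .inr hE⟩
end
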